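/- arXiv:1602.04351 — 5 statements merged into one kernel-verified Lean document; each statement's English description precedes it below -/
import Mathlib

section
/- If a and b are positive integers with a - 1 < b, then b^b · a^a < (b+1)^(b+1) · (a-1)^(a-1), where 0^0 is interpreted as 1. -/
/-! Taking logarithms, the inequality says that the increment of `x ↦ x log x` over `[n, n + 1]`
exceeds its increment over `[m, m + 1]` (with `m = a - 1`, `n = b`); this holds because
`x log x` is strictly convex on `[0, ∞)`, and `0 log 0 = 0` matches the convention `0 ^ 0 = 1`. -/

open Real Set

theorem StrictConvexOn.strictMono_sub_nat {f : ℝ → ℝ} (hf : StrictConvexOn ℝ (Ici 0) f) :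
    StrictMono fun k : ℕ => f (k + 1) - f k := by
  refine strictMono_nat_of_lt_succ fun k => ?_
  have := hf.slope_strict_mono_adjacent (x := k) (y := k + 1) (z := k + 2)
    (by simp) (by simp; positivity) (by simp) (by norm_num)
  push_cast
  convert this using 1 <;> ring_nf

theorem pow_self_mul_succ_pow_lt {m n : ℕ} (h : m < n) :
    n ^ n * (m + 1) ^ (m + 1) < (n + 1) ^ (n + 1) * m ^ m := by
  have hpos (k : ℕ) : (0 : ℝ) < (k : ℝ) ^ k := by exact_mod_cast Nat.pow_self_pos
  have hl : (0 : ℝ) < n ^ n * (m + 1) ^ (m + 1) := mul_pos (hpos n) (by positivity)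
  have hr : (0 : ℝ) < (n + 1) ^ (n + 1) * m ^ m := mul_pos (by positivity) (hpos m)
  suffices log ((n : ℝ) ^ n * (m + 1) ^ (m + 1)) < log (((n : ℝ) + 1) ^ (n + 1) * m ^ m) by
    exact_mod_cast (log_lt_log_iff hl hr).mp this
  have key := strictConvexOn_mul_log.strictMono_sub_nat h
  rw [log_mul (hpos n).ne' (by positivity), log_mul (by positivity) (hpos m).ne']
  simp only [log_pow] at key ⊢
  push_cast at key ⊢
  linarith

theorem zagreb2_swap_general (a b : ℕ) (ha : 0 < a) (h : a - 1 < b) :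
    b ^ b * a ^ a < (b + 1) ^ (b + 1) * (a - 1) ^ (a - 1) := by
  simpa [Nat.sub_add_cancel ha] using pow_self_mul_succ_pow_lt h

/-- If `a` and `b` are positive integers with `a - 1 < b`, then
`b^b * a^a < (b+1)^(b+1) * (a-1)^(a-1)` (with `0^0 = 1`). -/
theorem zagreb2_swap (a b : ℕ) (ha : 0 < a) (hb : 0 < b) (h : a - 1 < b) :
    b ^ b * a ^ a < (b + 1) ^ (b + 1) * (a - 1) ^ (a - 1) :=
  zagreb2_swap_general a b ha h
end

section
/- If u and v are positive integers with u > s and v ≥ u - s + 1 for a positive integer s, then v^v · u^u < (v+s)^(v+s) · (u-s)^(u-s), where 0^0 = 1. -/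
/-! With `f x = x log x`, so that `n ^ n = exp (f n)` for every natural `n` (also `0 ^ 0 = 1`),
the claim reads `f v + f (a + s) < f a + f (v + s)` for `a = u - s < v`: the increments of the
strictly convex function `f` over intervals of length `s` grow strictly with the left endpoint. -/

open Real

theorem StrictConvexOn.map_add_sub_map_lt {𝕜 : Type*} [Field 𝕜] [LinearOrder 𝕜]
    [IsStrictOrderedRing 𝕜] {s : Set 𝕜} {f : 𝕜 → 𝕜} (hf : StrictConvexOn 𝕜 s f) {a b d : 𝕜}
    (ha : a ∈ s) (hbd : b + d ∈ s) (hab : a < b) (hd : 0 < d) :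
    f (a + d) - f a < f (b + d) - f b := by
  have hslope : (f (a + d) - f a) / (a + d - a) < (f (b + d) - f b) / (b + d - b) :=
    (hf.secant_strict_mono_aux2 ha hbd (by linarith) (by linarith)).trans
      (hf.secant_strict_mono_aux3 ha hbd hab (by linarith))
  rwa [add_sub_cancel_left, add_sub_cancel_left, div_lt_div_iff_of_pos_right hd] at hslope

theorem Real.natCast_pow_self (n : ℕ) : (n : ℝ) ^ n = exp (n * log n) := by
  rcases n.eq_zero_or_pos with rfl | hn
  · simp
  · rw [exp_nat_mul, exp_log (by exact_mod_cast hn)]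

theorem Nat.pow_self_mul_pow_self_lt {a b d : ℕ} (hab : a < b) (hd : 0 < d) :
    b ^ b * (a + d) ^ (a + d) < (b + d) ^ (b + d) * a ^ a := by
  have hincr := strictConvexOn_mul_log.map_add_sub_map_lt (Set.mem_Ici.2 (Nat.cast_nonneg a))
    (Set.mem_Ici.2 (by positivity : (0 : ℝ) ≤ b + d))
    (Nat.cast_lt.2 hab) (Nat.cast_pos.2 hd)
  rw [← Nat.cast_lt (α := ℝ)]
  simp only [Nat.cast_mul, Nat.cast_pow, Real.natCast_pow_self, ← exp_add, exp_lt_exp]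
  push_cast
  linarith

theorem zagreb2_swap_s_general (u v s : ℕ) (hs : 0 < s)
    (hus : s < u) (h : u - s + 1 ≤ v) :
    v ^ v * u ^ u < (v + s) ^ (v + s) * (u - s) ^ (u - s) := by
  obtain ⟨a, rfl⟩ : ∃ a, u = a + s := ⟨u - s, by omega⟩
  rw [Nat.add_sub_cancel] at h ⊢
  exact Nat.pow_self_mul_pow_self_lt h hs

/-- If `u, v, s` are positive integers with `u > s` and `v ≥ u - s + 1`, then
`v^v * u^u < (v+s)^(v+s) * (u-s)^(u-s)` (with `0^0 = 1`). -/
theorem zagreb2_swap_s (u v s : ℕ) (hu : 0 < u) (hv : 0 < v) (hs : 0 < s)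
    (hus : s < u) (h : u - s + 1 ≤ v) :
    v ^ v * u ^ u < (v + s) ^ (v + s) * (u - s) ^ (u - s) :=
  zagreb2_swap_s_general u v s hs hus h
end

section
/- For any tree T on n ≥ 5 vertices, the Narumi–Katayama index ∏_{v ∈ V(T)} d(v) satisfies ∏(S_n) ≤ ∏(T) ≤ ∏(P_n), i.e., n-1 ≤ ∏_{v} d(v) ≤ 2^{n-2}, where S_n is the star and P_n the path on n vertices. -/
/-!
In a tree on `n` vertices the degrees sum to `2(n - 1)`, so the excesses `d(v) - 1` sum to
`n - 2`. The lower bound is then `1 + ∑ xᵥ ≤ ∏ (1 + xᵥ)` for `xᵥ ≥ 0`, and the upper bound is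
`d ≤ 2 ^ (d - 1)` multiplied over all vertices.
-/

open Finset

theorem Nat.le_two_pow_sub_one (a : ℕ) : a ≤ 2 ^ (a - 1) := by
  cases a with
  | zero => exact Nat.zero_le _
  | succ a => exact Nat.lt_two_pow_self

theorem Finset.sum_add_one_le_prod_add_one {ι R : Type*} [CommSemiring R] [PartialOrder R]
    [IsOrderedRing R] (s : Finset ι) {f : ι → R} (hf : ∀ i ∈ s, 0 ≤ f i) :
    ∑ i ∈ s, f i + 1 ≤ ∏ i ∈ s, (f i + 1) := by
  classical
  induction s using Finset.induction_on with
  | empty => simp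
  | insert a s ha ih =>
    have hs : ∀ i ∈ s, 0 ≤ f i := fun i hi => hf i (mem_insert_of_mem hi)
    have hprod : 1 ≤ ∏ i ∈ s, (f i + 1) :=
      one_le_prod fun i hi => le_add_of_nonneg_left (hs i hi)
    rw [sum_insert ha, prod_insert ha]
    calc f a + ∑ i ∈ s, f i + 1 ≤ f a * ∏ i ∈ s, (f i + 1) + ∏ i ∈ s, (f i + 1) := by
          rw [add_assoc]
          exact add_le_add (le_mul_of_one_le_right (hf a (mem_insert_self a s)) hprod) (ih hs)
      _ = (f a + 1) * ∏ i ∈ s, (f i + 1) := by ring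

namespace SimpleGraph

variable {V : Type*} [Fintype V] {G : SimpleGraph V} [DecidableRel G.Adj]

theorem IsTree.sum_degree_sub_one (hG : G.IsTree) :
    ∑ v, (G.degree v - 1) = Fintype.card V - 2 := by
  rcases subsingleton_or_nontrivial V with hV | hV
  · have hcard : Fintype.card V ≤ 1 := Fintype.card_le_one_iff_subsingleton.2 hV
    have hdeg : ∀ v, G.degree v - 1 = 0 := fun v => by
      have := G.degree_lt_card_verts v
      omega
    simp only [hdeg, sum_const_zero]
    omega
  · have hpos := hG.connected.preconnected.degree_pos_of_nontrivial
    have hedges := hG.card_edgeFinset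
    have hsum := G.sum_degrees_eq_twice_card_edges
    have hsplit : ∑ v, (G.degree v - 1) + Fintype.card V = ∑ v, G.degree v := by
      rw [← card_univ, card_eq_sum_ones, ← sum_add_distrib]
      exact sum_congr rfl fun v _ => Nat.sub_add_cancel (hpos v)
    omega

theorem IsTree.card_sub_one_le_prod_degree (hG : G.IsTree) :
    Fintype.card V - 1 ≤ ∏ v, G.degree v := by
  rcases subsingleton_or_nontrivial V with hV | hV
  · have := Fintype.card_le_one_iff_subsingleton.2 hV
    omega
  · have hpos := hG.connected.preconnected.degree_pos_of_nontrivial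
    have hcard := Fintype.one_lt_card (α := V)
    calc Fintype.card V - 1 = ∑ v, (G.degree v - 1) + 1 := by
          rw [hG.sum_degree_sub_one]
          omega
      _ ≤ ∏ v, (G.degree v - 1 + 1) := sum_add_one_le_prod_add_one _ fun _ _ => Nat.zero_le _
      _ = ∏ v, G.degree v := prod_congr rfl fun v _ => Nat.sub_add_cancel (hpos v)

theorem IsTree.prod_degree_le_two_pow (hG : G.IsTree) :
    ∏ v, G.degree v ≤ 2 ^ (Fintype.card V - 2) :=
  calc ∏ v, G.degree v ≤ ∏ v, 2 ^ (G.degree v - 1) :=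
        prod_le_prod' fun v _ => Nat.le_two_pow_sub_one _
    _ = 2 ^ (Fintype.card V - 2) := by rw [prod_pow_eq_pow_sum, hG.sum_degree_sub_one]

end SimpleGraph

theorem gutman_nk_general {V : Type*} [Fintype V] (G : SimpleGraph V) [DecidableRel G.Adj]
    (n : ℕ) (hcard : Fintype.card V = n) (hT : G.IsTree) :
    n - 1 ≤ ∏ v, G.degree v ∧ ∏ v, G.degree v ≤ 2 ^ (n - 2) := by
  subst hcard
  exact ⟨hT.card_sub_one_le_prod_degree, hT.prod_degree_le_two_pow⟩

/-- Theorem 1(i) (Gutman 2011): for any tree `T` on `n ≥ 5` vertices, the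
Narumi–Katayama index satisfies `n - 1 ≤ ∏_v d(v) ≤ 2^(n-2)`. -/
theorem gutman_nk {V : Type*} [Fintype V] (G : SimpleGraph V) [DecidableRel G.Adj]
    (n : ℕ) (hn : 5 ≤ n) (hcard : Fintype.card V = n) (hT : G.IsTree) :
    n - 1 ≤ ∏ v, G.degree v ∧ ∏ v, G.degree v ≤ 2 ^ (n - 2) :=
  gutman_nk_general G n hcard hT
end

section
/- For any tree T on n ≥ 5 vertices, ∏_2(P_n) ≤ ∏_2(T) ≤ ∏_2(S_n), i.e., 4^{n-2} ≤ ∏_{v ∈ V(T)} d(v)^{d(v)} ≤ (n-1)^{n-1}. -/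
/-!
Write every degree as `d = e + 1`; in a tree on `n ≥ 2` vertices the excesses `e` are natural
numbers summing to `n - 2`. The function `f e = (e + 1) ^ (e + 1)` is supermultiplicative,
`f a * f b ≤ f (a + b)`, which by Bernoulli's inequality reduces to `(a + 1) ^ (a + 1) * (b + 1) ≤
(a + b + 1) ^ (a + 1)`. Hence `∏ f (e v) ≤ f (n - 2) = (n - 1) ^ (n - 1)`, and since `f 1 = 4`,
also `4 ^ e ≤ f e`, so `4 ^ (n - 2) ≤ ∏ f (e v)`.
-/

open Finset

theorem succ_pow_succ_mul_succ_pow_succ_le (a b : ℕ) :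
    (a + 1) ^ (a + 1) * (b + 1) ^ (b + 1) ≤ (a + b + 1) ^ (a + b + 1) := by
  have bernoulli : (a + 1) ^ (a + 1) * (b + 1) ≤ (a + b + 1) ^ (a + 1) := by
    have := pow_add_mul_le_add_pow (a := a + 1) (b := b) (by positivity) (by positivity) (a + 1)
    calc (a + 1) ^ (a + 1) * (b + 1) = (a + 1) ^ (a + 1) + (a + 1) * (a + 1) ^ a * b := by ring
      _ ≤ (a + 1 + b) ^ (a + 1) := by exact_mod_cast this
      _ = (a + b + 1) ^ (a + 1) := by ring
  calc (a + 1) ^ (a + 1) * (b + 1) ^ (b + 1) = (a + 1) ^ (a + 1) * (b + 1) * (b + 1) ^ b := by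
        ring
    _ ≤ (a + b + 1) ^ (a + 1) * (a + b + 1) ^ b := by gcongr; omega
    _ = (a + b + 1) ^ (a + b + 1) := by rw [← pow_add, Nat.add_right_comm]

theorem prod_succ_pow_succ_le {ι : Type*} (s : Finset ι) (e : ι → ℕ) :
    ∏ i ∈ s, (e i + 1) ^ (e i + 1) ≤ (∑ i ∈ s, e i + 1) ^ (∑ i ∈ s, e i + 1) := by
  induction s using Finset.cons_induction with
  | empty => simp
  | cons a s _ ih =>
    rw [prod_cons, sum_cons]
    calc (e a + 1) ^ (e a + 1) * ∏ i ∈ s, (e i + 1) ^ (e i + 1)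
        ≤ (e a + 1) ^ (e a + 1) * (∑ i ∈ s, e i + 1) ^ (∑ i ∈ s, e i + 1) := by gcongr
      _ ≤ (e a + ∑ i ∈ s, e i + 1) ^ (e a + ∑ i ∈ s, e i + 1) :=
        succ_pow_succ_mul_succ_pow_succ_le _ _

theorem four_pow_le_succ_pow_succ (e : ℕ) : 4 ^ e ≤ (e + 1) ^ (e + 1) := by
  induction e with
  | zero => simp
  | succ e ih =>
    calc 4 ^ (e + 1) = 4 ^ e * (1 + 1) ^ (1 + 1) := by ring
      _ ≤ (e + 1) ^ (e + 1) * (1 + 1) ^ (1 + 1) := by gcongr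
      _ ≤ (e + 1 + 1) ^ (e + 1 + 1) := succ_pow_succ_mul_succ_pow_succ_le e 1

theorem SimpleGraph.IsTree.sum_degree_sub_one_s16 {V : Type*} [Fintype V] [Nontrivial V]
    {G : SimpleGraph V} [DecidableRel G.Adj] (hT : G.IsTree) :
    ∑ v, (G.degree v - 1) = Fintype.card V - 2 := by
  have hpos (v : V) : 0 < G.degree v := hT.connected.preconnected.degree_pos_of_nontrivial v
  have hdegrees : ∑ v, G.degree v = 2 * (Fintype.card V - 1) := by
    rw [G.sum_degrees_eq_twice_card_edges, ← hT.card_edgeFinset, Nat.add_sub_cancel]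
  have hsplit : ∑ v, G.degree v = ∑ v, (G.degree v - 1) + Fintype.card V :=
    calc ∑ v, G.degree v = ∑ v, (G.degree v - 1 + 1) :=
          sum_congr rfl fun v _ => (Nat.sub_add_cancel (hpos v)).symm
      _ = ∑ v, (G.degree v - 1) + Fintype.card V := by
          rw [sum_add_distrib, sum_const, card_univ, smul_eq_mul, mul_one]
  omega

/-- Theorem 1(ii) (Gutman 2011): for any tree `T` on `n ≥ 5` vertices,
`4^(n-2) ≤ ∏_v d(v)^{d(v)} ≤ (n-1)^(n-1)`. -/
theorem gutman_zagreb2 {V : Type*} [Fintype V] (G : SimpleGraph V) [DecidableRel G.Adj]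
    (n : ℕ) (hn : 5 ≤ n) (hcard : Fintype.card V = n) (hT : G.IsTree) :
    4 ^ (n - 2) ≤ ∏ v, G.degree v ^ G.degree v ∧
      ∏ v, G.degree v ^ G.degree v ≤ (n - 1) ^ (n - 1) := by
  have : Nontrivial V := Fintype.one_lt_card_iff_nontrivial.mp (by omega)
  have hprod : ∏ v, G.degree v ^ G.degree v =
      ∏ v, (G.degree v - 1 + 1) ^ (G.degree v - 1 + 1) :=
    prod_congr rfl fun v _ => by
      rw [Nat.sub_add_cancel (hT.connected.preconnected.degree_pos_of_nontrivial v)]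
  have hsum : ∑ v, (G.degree v - 1) = n - 2 := hcard ▸ hT.sum_degree_sub_one_s16
  constructor
  · calc 4 ^ (n - 2) = ∏ v, 4 ^ (G.degree v - 1) := by rw [prod_pow_eq_pow_sum, hsum]
      _ ≤ ∏ v, (G.degree v - 1 + 1) ^ (G.degree v - 1 + 1) :=
        prod_le_prod' fun v _ => four_pow_le_succ_pow_succ _
      _ = ∏ v, G.degree v ^ G.degree v := hprod.symm
  · calc ∏ v, G.degree v ^ G.degree v = ∏ v, (G.degree v - 1 + 1) ^ (G.degree v - 1 + 1) := hprod
      _ ≤ (∑ v, (G.degree v - 1) + 1) ^ (∑ v, (G.degree v - 1) + 1) := prod_succ_pow_succ_le _ _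
      _ = (n - 1) ^ (n - 1) := by rw [hsum, show n - 2 + 1 = n - 1 by omega]
end

section
/- Let G be a k-tree on n vertices. Then ∏_{1,c}(S_{k,n-k}) ≤ ∏_{1,c}(G) ≤ ∏_{1,c}(P_n^k) for every real c > 0, with equality on the left iff G ≅ S_{k,n-k} and on the right iff G ≅ P_n^k. -/
open scoped Classical

/-- Adding one new vertex (the last one of `Fin (n+1)`) joined to the set `S`
of vertices of a graph `G` on `Fin n`. -/
def addSimplicialVertex {n : ℕ} (G : SimpleGraph (Fin n)) (S : Finset (Fin n)) :
    SimpleGraph (Fin (n + 1)) :=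
  SimpleGraph.fromRel (fun a b =>
    (∃ (ha : a.val < n) (hb : b.val < n), G.Adj ⟨a.val, ha⟩ ⟨b.val, hb⟩) ∨
    (a.val = n ∧ ∃ hb : b.val < n, (⟨b.val, hb⟩ : Fin n) ∈ S))

/-- The recursive definition of a `k`-tree: the complete graph `K_k` is a `k`-tree, and
joining a new vertex to all vertices of a `k`-clique of a `k`-tree yields a `k`-tree. -/
inductive IsKTree (k : ℕ) : {n : ℕ} → SimpleGraph (Fin n) → Prop
  | base : IsKTree k (⊤ : SimpleGraph (Fin k))
  | extend {n : ℕ} {G : SimpleGraph (Fin n)} (S : Finset (Fin n))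
      (hcard : S.card = k) (hclique : G.IsClique ↑S) (hG : IsKTree k G) :
      IsKTree k (addSimplicialVertex G S)

/-- The `k`-star `S_{k,n-k}`. -/
def kStar (n k : ℕ) : SimpleGraph (Fin n) where
  Adj i j := i ≠ j ∧ (i.val < k ∨ j.val < k)
  symm := ⟨fun i j h => ⟨h.1.symm, h.2.symm⟩⟩
  loopless := ⟨fun i h => h.1 rfl⟩

/-- The `k`-path `P_n^k`. -/
def kPath (n k : ℕ) : SimpleGraph (Fin n) where
  Adj i j := i ≠ j ∧ i.val ≤ j.val + k ∧ j.val ≤ i.val + k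
  symm := ⟨fun i j h => ⟨h.1.symm, h.2.2, h.2.1⟩⟩
  loopless := ⟨fun i h => h.1 rfl⟩

/-- The first generalized multiplicative Zagreb index `∏_{1,c}(G) = ∏_v d(v)^c`. -/
noncomputable def Z1 {n : ℕ} (G : SimpleGraph (Fin n)) (c : ℝ) : ℝ :=
  ∏ v, (G.degree v : ℝ) ^ c

/-!
Write `P(G) = ∏_v d(v)`; then `∏_{1,c}(G) = P(G)^c`, so it suffices to take `c = 1`. Attaching a
new vertex to a `k`-clique `T` multiplies `P` by `k · ∏_{v ∈ T} g(d(v))` with `g(d) = (d+1)/d`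
strictly decreasing. Every degree is at most `n - 1`, which the `k`-star attains on the clique
it keeps attaching to. Conversely, the `i`-th smallest degree in a `k`-clique of a `k`-tree is at
least `min (k + i) (n - 1)`, and the `k`-path attains this on its end clique. Induction along the
construction gives both bounds. In the equality cases the attaching clique has exactly the
extremal degrees; an automorphism of the star (resp. path), permuting universal vertices and
possibly reversing the path, moves it onto the standard clique, so the isomorphism extends.
-/

open SimpleGraph Finset

lemma SimpleGraph.degree_eq_sum_ite {V : Type*} [Fintype V] (G : SimpleGraph V)
    [DecidableRel G.Adj] (v : V) : G.degree v = ∑ w, if G.Adj v w then 1 else 0 := by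
  rw [← card_neighborFinset_eq_degree, neighborFinset_eq_filter, card_filter]

lemma SimpleGraph.degree_eq_of_eq_top {n : ℕ} {G : SimpleGraph (Fin n)} (h : G = ⊤)
    (v : Fin n) : G.degree v = n - 1 := by
  simpa using (degree_eq_card_sub_one G v).2 (h ▸ IsUniversal.top)

lemma SimpleGraph.Iso.map_degree_image {n : ℕ} {G H : SimpleGraph (Fin n)} (τ : G ≃g H)
    (S : Finset (Fin n)) :
    (S.image τ).val.map (fun v => H.degree v) = S.val.map fun v => G.degree v := by
  rw [image_val_of_injOn τ.injective.injOn, Multiset.map_map]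
  exact Multiset.map_congr rfl fun v _ => τ.degree_eq v

lemma SimpleGraph.Iso.isClique_image {n : ℕ} {G H : SimpleGraph (Fin n)} (e : G ≃g H)
    {S : Finset (Fin n)} (h : G.IsClique (S : Set (Fin n))) :
    H.IsClique (S.image e : Set (Fin n)) := by
  rw [coe_image]
  rintro _ ⟨a, ha, rfl⟩ _ ⟨b, hb, rfl⟩ hab
  exact e.map_adj_iff.2 (h ha hb (ne_of_apply_ne e hab))

section AddSimplicialVertex

variable {n : ℕ} {G : SimpleGraph (Fin n)} {S : Finset (Fin n)}

@[simp]
lemma addSimplicialVertex_adj_castSucc_castSucc {x y : Fin n} :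
    (addSimplicialVertex G S).Adj x.castSucc y.castSucc ↔ G.Adj x y := by
  simpa [addSimplicialVertex, G.adj_comm y x, x.isLt.ne, y.isLt.ne] using Adj.ne

@[simp]
lemma addSimplicialVertex_adj_last_castSucc {y : Fin n} :
    (addSimplicialVertex G S).Adj (Fin.last n) y.castSucc ↔ y ∈ S := by
  simp [addSimplicialVertex, (Fin.castSucc_lt_last y).ne']

@[simp]
lemma addSimplicialVertex_adj_castSucc_last {x : Fin n} :
    (addSimplicialVertex G S).Adj x.castSucc (Fin.last n) ↔ x ∈ S := by
  rw [adj_comm, addSimplicialVertex_adj_last_castSucc]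

lemma degree_addSimplicialVertex_last : (addSimplicialVertex G S).degree (Fin.last n) = #S := by
  rw [degree_eq_sum_ite, Fin.sum_univ_castSucc]
  simp

lemma degree_addSimplicialVertex_castSucc (x : Fin n) :
    (addSimplicialVertex G S).degree x.castSucc = G.degree x + if x ∈ S then 1 else 0 := by
  rw [degree_eq_sum_ite, degree_eq_sum_ite, Fin.sum_univ_castSucc]
  simp

lemma addSimplicialVertex_top_univ :
    addSimplicialVertex (⊤ : SimpleGraph (Fin n)) univ = ⊤ := by
  ext a b
  induction a using Fin.lastCases <;> induction b using Fin.lastCases <;>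
    simp [(Fin.castSucc_lt_last _).ne, (Fin.castSucc_lt_last _).ne']

def SimpleGraph.Iso.addSimplicialVertex {H : SimpleGraph (Fin n)} (e : G ≃g H)
    (S : Finset (Fin n)) :
    addSimplicialVertex G S ≃g addSimplicialVertex H (S.image e) where
  toEquiv := finSuccEquivLast.trans ((Equiv.optionCongr e.toEquiv).trans finSuccEquivLast.symm)
  map_rel_iff' {a b} := by
    induction a using Fin.lastCases <;> induction b using Fin.lastCases <;> simp [e.map_adj_iff]

lemma nonempty_iso_addSimplicialVertex {H : SimpleGraph (Fin n)} {W : Finset (Fin n)}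
    (φ : G ≃g H) (hφ : S.image φ = W) :
    Nonempty (addSimplicialVertex G S ≃g addSimplicialVertex H W) :=
  ⟨hφ ▸ φ.addSimplicialVertex S⟩

end AddSimplicialVertex

section CastSuccPreimage

variable {n : ℕ} {G : SimpleGraph (Fin n)} {T : Finset (Fin n)} {S : Finset (Fin (n + 1))}

def castSuccPreimage (S : Finset (Fin (n + 1))) : Finset (Fin n) :=
  univ.filter fun x => x.castSucc ∈ S

@[simp]
lemma mem_castSuccPreimage {x : Fin n} : x ∈ castSuccPreimage S ↔ x.castSucc ∈ S := by
  simp [castSuccPreimage]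

lemma map_castSuccPreimage (S : Finset (Fin (n + 1))) :
    (castSuccPreimage S).map Fin.castSuccEmb = S.erase (Fin.last n) := by
  ext v
  induction v using Fin.lastCases <;> simp [(Fin.castSucc_lt_last _).ne]

lemma eq_map_castSuccPreimage (h : Fin.last n ∉ S) :
    S = (castSuccPreimage S).map Fin.castSuccEmb := by
  rw [map_castSuccPreimage, erase_eq_of_notMem h]

lemma card_le_card_castSuccPreimage_add_one : #S ≤ #(castSuccPreimage S) + 1 := by
  rw [← card_map Fin.castSuccEmb (s := castSuccPreimage S), map_castSuccPreimage]
  have := pred_card_le_card_erase (s := S) (a := Fin.last n)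
  omega

lemma isClique_castSuccPreimage
    (hS : (addSimplicialVertex G T).IsClique (S : Set (Fin (n + 1)))) :
    G.IsClique (castSuccPreimage S : Set (Fin n)) := fun x hx y hy hne =>
  addSimplicialVertex_adj_castSucc_castSucc.1
    (hS (mem_castSuccPreimage.1 hx) (mem_castSuccPreimage.1 hy) (by simpa using hne))

lemma castSuccPreimage_subset
    (hS : (addSimplicialVertex G T).IsClique (S : Set (Fin (n + 1)))) (h : Fin.last n ∈ S) :
    castSuccPreimage S ⊆ T := fun x hx =>
  addSimplicialVertex_adj_last_castSucc.1
    (hS h (mem_castSuccPreimage.1 hx) (Fin.castSucc_lt_last x).ne')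

lemma card_filter_of_last_notMem (h : Fin.last n ∉ S) (Q : Fin (n + 1) → Prop)
    [DecidablePred Q] : #{v ∈ S | Q v} = #{x ∈ castSuccPreimage S | Q x.castSucc} := by
  conv_lhs => rw [eq_map_castSuccPreimage h]
  rw [filter_map, card_map]
  rfl

lemma card_filter_degree_lt_le_of_last_mem {k i : ℕ}
    (hS : (addSimplicialVertex G T).IsClique (S : Set (Fin (n + 1)))) (h : Fin.last n ∈ S)
    (hT : #{x ∈ T | G.degree x < min (k + i) (n - 1)} ≤ i) :
    #{v ∈ S | (addSimplicialVertex G T).degree v < min (k + (i + 1)) n} ≤ i + 1 := by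
  have hsub : {v ∈ S | (addSimplicialVertex G T).degree v < min (k + (i + 1)) n}
      ⊆ insert (Fin.last n)
          ({x ∈ T | G.degree x < min (k + i) (n - 1)}.map Fin.castSuccEmb) := by
    intro v hv
    induction v using Fin.lastCases with
    | last => exact mem_insert_self _ _
    | cast x =>
      obtain ⟨hxS, hx⟩ := mem_filter.1 hv
      have hxT := castSuccPreimage_subset hS h (mem_castSuccPreimage.2 hxS)
      rw [degree_addSimplicialVertex_castSucc, if_pos hxT] at hx
      simp only [mem_insert, mem_map, mem_filter, Fin.castSuccEmb_apply]
      exact Or.inr ⟨x, ⟨hxT, by omega⟩, rfl⟩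
  have := (card_le_card hsub).trans (card_insert_le _ _)
  rw [card_map] at this
  omega

end CastSuccPreimage

namespace IsKTree

variable {n k : ℕ} {G : SimpleGraph (Fin n)}

theorem le_card (hG : IsKTree k G) : k ≤ n := by
  induction hG <;> omega

theorem eq_top_of_card_le (hG : IsKTree k G) (hn : n ≤ k + 1) : G = ⊤ := by
  induction hG with
  | base => rfl
  | @extend m G' T hT _ hG' ih =>
    obtain rfl := ih (by omega)
    obtain rfl : T = univ := eq_univ_of_card T (by simp; have := hG'.le_card; omega)
    exact addSimplicialVertex_top_univ

/-- Induction on `k`-trees whose base case covers all `k`-trees on at most `k + 1` vertices,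
which are complete. -/
theorem top_induction {P : (n : ℕ) → SimpleGraph (Fin n) → Prop}
    (top : ∀ n ≤ k + 1, P n ⊤)
    (step : ∀ (m : ℕ) (G : SimpleGraph (Fin m)) (T : Finset (Fin m)), IsKTree k G →
      k + 1 ≤ m → #T = k → G.IsClique (T : Set (Fin m)) → P m G →
      P (m + 1) (addSimplicialVertex G T))
    (hG : IsKTree k G) : P n G := by
  induction hG with
  | base => exact top k (by omega)
  | @extend m G T hT hTc hG ih =>
    by_cases hm : k + 1 ≤ m
    · exact step m G T hG hm hT hTc ih
    · rw [(IsKTree.extend T hT hTc hG).eq_top_of_card_le (by omega)]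
      exact top (m + 1) (by omega)

theorem le_degree (hG : IsKTree k G) (hn : k + 1 ≤ n) (v : Fin n) : k ≤ G.degree v := by
  induction hG with
  | base => omega
  | @extend m G' T hT hTc hG' ih =>
    rcases (show m = k ∨ k + 1 ≤ m by have := hG'.le_card; omega) with rfl | hm
    · rw [degree_eq_of_eq_top ((IsKTree.extend T hT hTc hG').eq_top_of_card_le le_rfl)]
      omega
    · induction v using Fin.lastCases with
      | last => rw [degree_addSimplicialVertex_last, hT]
      | cast x => rw [degree_addSimplicialVertex_castSucc]; have := ih hm x; omega

theorem card_le_of_isClique (hG : IsKTree k G) {C : Finset (Fin n)}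
    (hC : G.IsClique (C : Set (Fin n))) : #C ≤ k + 1 := by
  induction hG with
  | base => simpa using (card_le_univ C).trans (Nat.le_succ _)
  | @extend m G' T hT _ _ ih =>
    by_cases hlast : Fin.last m ∈ C
    · have := card_le_card (castSuccPreimage_subset hC hlast)
      have := card_le_card_castSuccPreimage_add_one (S := C)
      omega
    · rw [eq_map_castSuccPreimage hlast, card_map]
      exact ih (isClique_castSuccPreimage hC)

theorem card_universal_sdiff_le_one (hG : IsKTree k G) {T : Finset (Fin n)}
    (hT : G.IsClique (T : Set (Fin n))) (hTk : #T = k) :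
    #(univ.filter G.IsUniversal \ T) ≤ 1 := by
  have hclique : G.IsClique ((T ∪ univ.filter G.IsUniversal : Finset (Fin n)) : Set (Fin n)) := by
    intro a ha b hb hab
    simp only [coe_union, coe_filter, mem_univ, true_and, Set.mem_union, mem_coe] at ha hb
    rcases ha with ha | ha
    · rcases hb with hb | hb
      · exact hT ha hb hab
      · exact (hb hab.symm).symm
    · exact ha hab
  have := hG.card_le_of_isClique hclique
  rw [union_comm, ← card_sdiff_add_card] at this
  omega

/-- Equivalently, the `i`-th smallest degree in a `k`-clique is at least `min (k + i) (n - 1)`,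
the `i`-th smallest degree in the end clique of the `k`-path. -/
theorem card_filter_degree_lt_le (hG : IsKTree k G) {S : Finset (Fin n)}
    (hS : G.IsClique (S : Set (Fin n))) (hSk : #S = k) (i : ℕ) :
    #{v ∈ S | G.degree v < min (k + i) (n - 1)} ≤ i := by
  induction hG generalizing i with
  | base => simp [degree_eq_of_eq_top rfl]
  | @extend m G' T hT hTc hG' ih =>
    rcases i with _ | i
    · simp only [add_zero, Nat.le_zero, card_eq_zero, filter_eq_empty_iff, not_lt]
      exact fun v _ => (min_le_left _ _).trans
        ((IsKTree.extend T hT hTc hG').le_degree (by have := hG'.le_card; omega) v)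
    rw [Nat.add_sub_cancel]
    by_cases hlast : Fin.last m ∈ S
    · exact card_filter_degree_lt_le_of_last_mem hS hlast (ih hTc hT i)
    have ih₀ := ih (isClique_castSuccPreimage hS)
      (by rwa [eq_map_castSuccPreimage hlast, card_map] at hSk)
    rw [card_filter_of_last_notMem hlast,
      filter_congr fun x _ => by rw [degree_addSimplicialVertex_castSucc]]
    by_cases hki : k + (i + 1) ≤ m - 1
    · refine (card_le_card fun x hx => ?_).trans (ih₀ (i + 1))
      simp only [mem_filter] at hx ⊢
      refine ⟨hx.1, ?_⟩
      split_ifs at hx <;> omega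
    -- a vertex outside `T` keeps its degree, so a universal one may now fall short (at most one)
    have hsub : {x ∈ castSuccPreimage S |
          G'.degree x + (if x ∈ T then 1 else 0) < min (k + (i + 1)) m}
        ⊆ {x ∈ castSuccPreimage S | G'.degree x < min (k + i) (m - 1)}
          ∪ (univ.filter G'.IsUniversal \ T) := fun x hx => by
      have := G'.degree_lt_card_verts x
      rw [Fintype.card_fin] at this
      simp only [mem_filter, mem_union, mem_sdiff, mem_univ, true_and,
        ← degree_eq_card_sub_one, Fintype.card_fin] at hx ⊢
      obtain ⟨hxS, hx⟩ := hx
      by_cases hxT : x ∈ T <;> simp only [hxT, if_true, if_false] at hx <;> simp [hxS, hxT] <;>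
        omega
    have := (card_le_card hsub).trans (card_union_le _ _)
    have := ih₀ i
    have := hG'.card_universal_sdiff_le_one hTc hT
    omega

end IsKTree

section Universal

variable {V : Type*} [DecidableEq V] {G : SimpleGraph V}

def SimpleGraph.swapIso {a b : V} (ha : G.IsUniversal a) (hb : G.IsUniversal b) : G ≃g G where
  toEquiv := Equiv.swap a b
  map_rel_iff' {x y} := by
    simp only [Equiv.swap_apply_def]
    split_ifs <;> subst_vars <;> grind [IsUniversal, SimpleGraph.adj_comm, SimpleGraph.irrefl]

lemma Finset.image_swap_of_mem_of_notMem {A : Finset V} {a b : V} (haA : a ∈ A) (hbA : b ∉ A) :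
    A.image (Equiv.swap a b) = insert b (A.erase a) := by
  ext v
  simp only [mem_image, mem_insert, mem_erase]
  grind

theorem SimpleGraph.exists_iso_image_eq_of_isUniversal (A B : Finset V) (hAB : #A = #B)
    (hA : ∀ v ∈ A, v ∉ B → G.IsUniversal v)
    (hB : ∀ v ∈ B, v ∉ A → G.IsUniversal v) :
    ∃ τ : G ≃g G, A.image τ = B := by
  induction h : #(A \ B) using Nat.strong_induction_on generalizing A with
  | _ d ih =>
  obtain hempty | ⟨a, ha⟩ := (A \ B).eq_empty_or_nonempty
  · refine ⟨Iso.refl, ?_⟩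
    rw [show ⇑(Iso.refl : G ≃g G) = id from rfl, image_id]
    exact eq_of_subset_of_card_le (sdiff_eq_empty_iff_subset.1 hempty) hAB.ge
  obtain ⟨b, hb⟩ : (B \ A).Nonempty := by
    rw [← card_pos, card_sdiff_comm hAB.symm]
    exact card_pos.2 ⟨a, ha⟩
  obtain ⟨haA, haB⟩ := mem_sdiff.1 ha
  obtain ⟨hbB, hbA⟩ := mem_sdiff.1 hb
  -- swapping the universal vertices `a` and `b` moves `A` to `A'`, which is closer to `B`
  set A' := insert b (A.erase a)
  have hsdiff : A' \ B = (A \ B).erase a := by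
    ext v
    by_cases hvb : v = b <;> simp [A', hvb, hbB]
    tauto
  have hcard : #A' = #B := by
    rw [card_insert_of_notMem (by simp [hbA]), card_erase_of_mem haA, ← hAB]
    have := card_pos.2 ⟨a, haA⟩
    omega
  have hA' : ∀ v ∈ A', v ∉ B → G.IsUniversal v := fun v hv hvB =>
    hA v (mem_sdiff.1 (mem_of_mem_erase (hsdiff ▸ mem_sdiff.2 ⟨hv, hvB⟩))).1 hvB
  have hB' : ∀ v ∈ B, v ∉ A' → G.IsUniversal v := fun v hvB hv =>
    hB v hvB fun hvA => hv (mem_insert_of_mem (mem_erase.2 ⟨by rintro rfl; exact haB hvB, hvA⟩))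
  have hlt : #(A' \ B) < d := by
    rw [← h, hsdiff, card_erase_of_mem ha]
    exact Nat.sub_lt (card_pos.2 ⟨a, ha⟩) one_pos
  obtain ⟨τ, hτ⟩ := ih _ hlt A' hcard hA' hB' rfl
  let σ := swapIso (hA a haA haB) (hB b hbB hbA)
  have hσ : A.image σ = A' := image_swap_of_mem_of_notMem haA hbA
  refine ⟨σ.trans τ, ?_⟩
  rw [show ⇑(σ.trans τ) = τ ∘ σ from rfl, ← image_image, hσ, hτ]

end Universal

section StarPath

variable {n k : ℕ}

def starCore (n k : ℕ) : Finset (Fin n) := {v | v.val < k}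

def pathTail (n k : ℕ) : Finset (Fin n) := {v | n ≤ v.val + k}

lemma card_starCore (h : k ≤ n) : #(starCore n k) = k := by
  rw [starCore, Fin.card_filter_val_lt, min_eq_right h]

lemma map_revPerm_starCore : (starCore n k).map Fin.revPerm.toEmbedding = pathTail n k := by
  ext v
  simp only [mem_map_equiv, Fin.revPerm_symm, Fin.revPerm_apply, starCore, pathTail, mem_filter,
    mem_univ, true_and, Fin.val_rev]
  omega

lemma card_pathTail (h : k ≤ n) : #(pathTail n k) = k := by
  rw [← map_revPerm_starCore, card_map, card_starCore h]

lemma kStar_eq_top (h : n ≤ k + 1) : kStar n k = ⊤ := by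
  ext a b
  simp only [kStar, top_adj]
  omega

lemma kPath_eq_top (h : n ≤ k + 1) : kPath n k = ⊤ := by
  ext a b
  simp only [kPath, top_adj]
  omega

lemma addSimplicialVertex_kStar :
    addSimplicialVertex (kStar n k) (starCore n k) = kStar (n + 1) k := by
  ext a b
  induction a using Fin.lastCases <;> induction b using Fin.lastCases <;>
    simp [kStar, starCore, Fin.ext_iff] <;> omega

lemma addSimplicialVertex_kPath :
    addSimplicialVertex (kPath n k) (pathTail n k) = kPath (n + 1) k := by
  ext a b
  induction a using Fin.lastCases <;> induction b using Fin.lastCases <;>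
    simp [kPath, pathTail, Fin.ext_iff] <;> omega

lemma isUniversal_kStar {v : Fin n} (hv : v.val < k) : (kStar n k).IsUniversal v :=
  fun _ hvw => ⟨hvw, Or.inl hv⟩

lemma degree_kPath (v : Fin n) : (kPath n k).degree v = min (v : ℕ) k + min (n - 1 - v) k := by
  have hadj : ∀ w : Fin n, (if (kPath n k).Adj v w then 1 else 0) =
      if (w : ℕ) ∈ Ico (v - k) v ∪ Ico (v + 1) (min (v + k + 1) n) then 1 else 0 := by
    intro w
    simp only [kPath, ne_eq, Fin.ext_iff, mem_union, mem_Ico]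
    congr 1
    have := w.isLt
    apply propext
    omega
  rw [degree_eq_sum_ite, sum_congr rfl fun w _ => hadj w,
    Fin.sum_univ_eq_sum_range (fun j => if j ∈ Ico (v - k) v ∪ Ico (v + 1) (min (v + k + 1) n)
      then 1 else 0), sum_boole, Nat.cast_id, filter_mem_eq_inter,
    inter_eq_right.2 fun j hj => by simp only [mem_union, mem_Ico, mem_range] at hj ⊢; omega,
    card_union_of_disjoint
      (disjoint_left.2 fun j hj hj' => by simp only [mem_Ico] at hj hj'; omega),
    Nat.card_Ico, Nat.card_Ico]
  omega

lemma prod_starCore (h : k ≤ n) (f : ℕ → ℝ) :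
    ∏ v ∈ starCore n k, f v = ∏ j ∈ range k, f j := by
  rw [show ∏ v ∈ starCore n k, f v = ∏ j ∈ (starCore n k).map Fin.valEmbedding, f j from
    (prod_map (starCore n k) Fin.valEmbedding f).symm]
  congr 1
  ext j
  simp only [starCore, mem_map, mem_filter, mem_univ, true_and, Fin.valEmbedding_apply, mem_range]
  exact ⟨fun ⟨v, hv, hvj⟩ => hvj ▸ hv, fun hj => ⟨⟨j, by omega⟩, hj, rfl⟩⟩

def kPathReverse (n k : ℕ) : kPath n k ≃g kPath n k where
  toEquiv := Fin.revPerm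
  map_rel_iff' {a b} := by
    simp only [kPath, Fin.revPerm_apply, ne_eq, Fin.rev_inj, Fin.val_rev]
    omega

end StarPath

section PathTail

variable {m k : ℕ}

/-- `hstart` says that `S` contains none of the vertices `v < min k (m - 1 - k)`, the
low-degree vertices at the start of the path. -/
lemma exists_iso_image_eq_pathTail_of_avoids_start (hm : k + 1 ≤ m) {S : Finset (Fin m)}
    (hSk : #S = k)
    (hdeg : S.val.map (fun v => (kPath m k).degree v) =
      (range k).val.map fun j => min (k + j) (m - 1))
    (hstart : ∀ v ∈ S, (v : ℕ) < k → m - 1 ≤ k + v) :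
    ∃ τ : kPath m k ≃g kPath m k, S.image τ = pathTail m k := by
  have huniv : ∀ v, (kPath m k).degree v = m - 1 → (kPath m k).IsUniversal v := fun v h =>
    (degree_eq_card_sub_one _ v).1 (by simpa using h)
  have hS : ∀ v ∈ S, ∃ j < k, (kPath m k).degree v = min (k + j) (m - 1) := fun v hv => by
    have := Multiset.mem_map_of_mem (fun v => (kPath m k).degree v) hv
    rw [hdeg, Multiset.mem_map] at this
    simpa [eq_comm] using this
  have hT : ∀ j < k, ∃ v ∈ S, (kPath m k).degree v = min (k + j) (m - 1) := fun j hj => by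
    have := Multiset.mem_map_of_mem (fun j => min (k + j) (m - 1)) (s := (range k).val)
      (mem_range.2 hj)
    rw [← hdeg, Multiset.mem_map] at this
    exact this
  refine exists_iso_image_eq_of_isUniversal S (pathTail m k)
    (by rw [hSk, card_pathTail (by omega)]) ?_ ?_
  -- `v` is away from both ends, so its degree is `min (2 * k) (m - 1)`; `hdeg` forces `m - 1`
  · intro v hv hvT
    obtain ⟨j, hj, hdv⟩ := hS v hv
    have := hstart v hv
    simp only [pathTail, mem_filter, mem_univ, true_and, not_le] at hvT
    rw [degree_kPath] at hdv
    apply huniv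
    rw [degree_kPath]
    omega
  -- otherwise `v` has degree `k + (m - 1 - v)`, shared only with the start vertex `m - 1 - v`
  · intro v hvT hvS
    simp only [pathTail, mem_filter, mem_univ, true_and] at hvT
    apply huniv
    rw [degree_kPath]
    by_contra hne
    obtain ⟨w, hw, hdw⟩ := hT (m - 1 - v) (by omega)
    rw [degree_kPath] at hdw
    have hwv : (w : ℕ) ≠ v := fun h => hvS (Fin.ext h ▸ hw)
    have := hstart w hw
    omega

lemma exists_iso_image_eq_pathTail (hk : 0 < k) (hm : k + 1 ≤ m) {S : Finset (Fin m)}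
    (hS : (kPath m k).IsClique (S : Set (Fin m))) (hSk : #S = k)
    (hdeg : S.val.map (fun v => (kPath m k).degree v) =
      (range k).val.map fun j => min (k + j) (m - 1)) :
    ∃ τ : kPath m k ≃g kPath m k, S.image τ = pathTail m k := by
  have hspan : ∀ v ∈ S, ∀ w ∈ S, (v : ℕ) ≤ w + k := fun v hv w hw => by
    rcases eq_or_ne v w with rfl | hvw
    · omega
    · exact (hS hv hw hvw).2.1
  by_cases hmk : m - 1 ≤ k
  · exact exists_iso_image_eq_pathTail_of_avoids_start hm hSk hdeg fun v _ _ => by omega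
  -- `S` contains an end of the path, and being a clique it avoids the low-degree vertices at
  -- the other end; up to reversing the path, that other end is the start
  obtain ⟨e, he, hde⟩ : ∃ e ∈ S, (kPath m k).degree e = k := by
    have := Multiset.mem_map_of_mem (fun j => min (k + j) (m - 1)) (s := (range k).val)
      (mem_range.2 hk)
    rw [← hdeg, Multiset.mem_map] at this
    obtain ⟨e, he, hde⟩ := this
    exact ⟨e, he, by omega⟩
  rw [degree_kPath] at hde
  have := e.isLt
  rcases (show (e : ℕ) = m - 1 ∨ (e : ℕ) = 0 by omega) with he_last | he_zero
  · refine exists_iso_image_eq_pathTail_of_avoids_start hm hSk hdeg fun v hv _ => ?_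
    have := hspan e he v hv
    omega
  · obtain ⟨τ, hτ⟩ := exists_iso_image_eq_pathTail_of_avoids_start hm
      (S := S.image (kPathReverse m k)) (by rwa [card_image_of_injective _ (RelIso.injective _)])
      (by rw [(kPathReverse m k).map_degree_image, hdeg]) (fun w hw hwk => by
        obtain ⟨u, hu, rfl⟩ := mem_image.1 hw
        have := hspan u hu e he
        have := u.isLt
        simp only [kPathReverse, RelIso.coe_fn_mk, Fin.revPerm_apply, Fin.val_rev] at hwk ⊢
        omega)
    exact ⟨(kPathReverse m k).trans τ, by rw [← hτ, image_image]; rfl⟩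

end PathTail

section DegreeProd

variable {n : ℕ}

noncomputable def degreeProd (G : SimpleGraph (Fin n)) : ℝ := ∏ v, (G.degree v : ℝ)

lemma Z1_eq_degreeProd_rpow (G : SimpleGraph (Fin n)) (c : ℝ) : Z1 G c = degreeProd G ^ c :=
  Real.finsetProd_rpow _ _ (fun _ _ => Nat.cast_nonneg _) c

lemma degreeProd_nonneg (G : SimpleGraph (Fin n)) : 0 ≤ degreeProd G :=
  prod_nonneg fun _ _ => Nat.cast_nonneg _

lemma degreeProd_pos {G : SimpleGraph (Fin n)} (h : ∀ v, 0 < G.degree v) : 0 < degreeProd G :=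
  prod_pos fun v _ => Nat.cast_pos.2 (h v)

lemma SimpleGraph.Iso.degreeProd_eq {G H : SimpleGraph (Fin n)} (e : G ≃g H) :
    degreeProd G = degreeProd H := by
  unfold degreeProd
  rw [← e.toEquiv.prod_comp (fun v => (H.degree v : ℝ))]
  simp

noncomputable def degreeGrowth (d : ℕ) : ℝ := (d + 1) / d

lemma degreeGrowth_nonneg (d : ℕ) : 0 ≤ degreeGrowth d := by
  unfold degreeGrowth; positivity

lemma degreeGrowth_pos {d : ℕ} (hd : 0 < d) : 0 < degreeGrowth d := by
  unfold degreeGrowth; positivity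

lemma degreeGrowth_strictAntiOn : StrictAntiOn degreeGrowth (Set.Ici 1) := by
  intro a ha b hb hab
  simp only [Set.mem_Ici] at ha hb
  have ha' : (1 : ℝ) ≤ a := by exact_mod_cast ha
  have hab' : (a : ℝ) < b := by exact_mod_cast hab
  rw [degreeGrowth, degreeGrowth, div_lt_div_iff₀ (by linarith) (by linarith)]
  linarith

lemma degreeProd_addSimplicialVertex {G : SimpleGraph (Fin n)} {S : Finset (Fin n)}
    (hS : ∀ v ∈ S, 0 < G.degree v) :
    degreeProd (addSimplicialVertex G S) =
      #S * (∏ v ∈ S, degreeGrowth (G.degree v)) * degreeProd G := by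
  have hv : ∀ v, ((G.degree v + if v ∈ S then 1 else 0 : ℕ) : ℝ) =
      (if v ∈ S then degreeGrowth (G.degree v) else 1) * G.degree v := fun v => by
    split_ifs with h
    · have : (G.degree v : ℝ) ≠ 0 := Nat.cast_ne_zero.2 (hS v h).ne'
      simp [degreeGrowth, div_mul_cancel₀ _ this]
    · simp
  simp only [degreeProd, Fin.prod_univ_castSucc, degree_addSimplicialVertex_castSucc,
    degree_addSimplicialVertex_last, hv, prod_mul_distrib, prod_ite_mem, univ_inter]
  ring

end DegreeProd

section Recurrences

variable {m k : ℕ}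

lemma degreeProd_kStar_succ (hm : k + 1 ≤ m) :
    degreeProd (kStar (m + 1) k) = k * degreeGrowth (m - 1) ^ k * degreeProd (kStar m k) := by
  have hcore : ∀ v ∈ starCore m k, (kStar m k).degree v = m - 1 := fun v hv => by
    simpa using (degree_eq_card_sub_one _ v).2 (isUniversal_kStar (by simpa [starCore] using hv))
  rw [← addSimplicialVertex_kStar, degreeProd_addSimplicialVertex fun v hv => by
    rw [hcore v hv]; simp [starCore] at hv; omega, prod_congr rfl fun v hv => by rw [hcore v hv],
    prod_const, card_starCore (by omega)]

lemma degreeProd_kPath_succ (hm : k + 1 ≤ m) :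
    degreeProd (kPath (m + 1) k) =
      k * (∏ j ∈ range k, degreeGrowth (min (k + j) (m - 1))) * degreeProd (kPath m k) := by
  have htail : ∀ v ∈ pathTail m k, 0 < (kPath m k).degree v := fun v hv => by
    simp only [pathTail, mem_filter, mem_univ, true_and] at hv
    rw [degree_kPath]
    omega
  rw [← addSimplicialVertex_kPath, degreeProd_addSimplicialVertex htail, card_pathTail (by omega),
    ← map_revPerm_starCore, prod_map, ← prod_starCore (n := m) (by omega)]
  congr 2
  refine prod_congr rfl fun v hv => ?_
  simp only [starCore, mem_filter, mem_univ, true_and] at hv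
  simp only [Equiv.coe_toEmbedding, Fin.revPerm_apply, degree_kPath, Fin.val_rev]
  congr 1
  omega

end Recurrences

lemma Finset.forall_eq_of_prod_eq_prod {ι : Type*} {s : Finset ι} {f g : ι → ℝ}
    (hf : ∀ i ∈ s, 0 < f i) (hfg : ∀ i ∈ s, f i ≤ g i)
    (h : ∏ i ∈ s, f i = ∏ i ∈ s, g i) :
    ∀ i ∈ s, f i = g i := by
  by_contra! ⟨i, hi, hne⟩
  exact h.not_lt (prod_lt_prod hf hfg ⟨i, hi, lt_of_le_of_ne (hfg i hi) hne⟩)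

section Majorization

variable {α : Type*} {S : Finset α} {d : α → ℕ} {μ : ℕ → ℕ}

lemma le_getElem_sort (hcount : ∀ i < #S, #{v ∈ S | d v < μ i} ≤ i)
    (i : ℕ) (hi : i < ((S.val.map d).sort).length) : μ i ≤ ((S.val.map d).sort)[i] := by
  set l := (S.val.map d).sort
  by_contra! hlt
  have hlen : l.length = #S := by simp [l]
  have htake : ∀ x ∈ l.take (i + 1), decide (x < μ i) := fun x hx => by
    obtain ⟨j, hj, rfl⟩ := List.mem_iff_getElem.1 hx
    simp only [List.length_take] at hj
    rw [List.getElem_take, decide_eq_true_eq]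
    exact lt_of_le_of_lt ((Multiset.pairwise_sort _ _).rel_get_of_le
      (a := ⟨j, by omega⟩) (b := ⟨i, hi⟩) (Fin.mk_le_mk.2 (by omega))) hlt
  have hcount_l : #{v ∈ S | d v < μ i} = l.countP (fun x => decide (x < μ i)) := by
    rw [← Multiset.coe_countP, Multiset.sort_eq, Multiset.countP_map]
    rfl
  have := (List.take_sublist (i + 1) l).countP_le (p := fun x => decide (x < μ i))
  rw [List.countP_eq_length.2 htake, List.length_take, ← hcount_l] at this
  have := hcount i (by omega)
  omega

/-- Pairing the values of `d` in increasing order with `μ 0, μ 1, …` compares the products. -/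
theorem prod_le_prod_of_card_filter_lt_le {f : ℕ → ℝ} (hf : StrictAntiOn f (Set.Ici 1))
    (hf0 : ∀ x, 1 ≤ x → 0 < f x) (hμ : ∀ i < #S, 1 ≤ μ i)
    (hcount : ∀ i < #S, #{v ∈ S | d v < μ i} ≤ i) :
    ∏ v ∈ S, f (d v) ≤ ∏ i ∈ range #S, f (μ i) ∧
      (∏ v ∈ S, f (d v) = ∏ i ∈ range #S, f (μ i) →
        S.val.map d = (range #S).val.map μ) := by
  set l := (S.val.map d).sort
  have hlen : l.length = #S := by simp [l]
  have hμl : ∀ i : Fin l.length, μ i ∈ Set.Ici 1 := fun i => hμ i (hlen ▸ i.2)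
  have hl : ∀ i : Fin l.length, l[i.1] ∈ Set.Ici 1 := fun i =>
    (hμl i).trans (le_getElem_sort hcount i i.2)
  have hle : ∀ i ∈ (univ : Finset (Fin l.length)), f l[i.1] ≤ f (μ i) := fun i _ =>
    hf.antitoneOn (hμl i) (hl i) (le_getElem_sort hcount i i.2)
  have hpos : ∀ i ∈ (univ : Finset (Fin l.length)), 0 < f l[i.1] := fun i _ => hf0 _ (hl i)
  have hprod_l : ∏ v ∈ S, f (d v) = ∏ i : Fin l.length, f l[i.1] := by
    rw [Fin.prod_univ_fun_getElem, ← Multiset.prod_coe, ← Multiset.map_coe, Multiset.sort_eq,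
      Multiset.map_map]
    rfl
  have hprod_μ : ∏ i ∈ range #S, f (μ i) = ∏ i : Fin l.length, f (μ i) := by
    rw [Fin.prod_univ_eq_prod_range (fun i => f (μ i)), hlen]
  rw [hprod_l, hprod_μ]
  refine ⟨prod_le_prod (fun i hi => (hpos i hi).le) hle, fun heq => ?_⟩
  have hl_eq : l = (List.range #S).map μ := by
    refine List.ext_getElem (by simp [hlen]) fun i h₁ h₂ => ?_
    have := forall_eq_of_prod_eq_prod hpos hle heq ⟨i, h₁⟩ (mem_univ _)
    simpa using hf.injOn (hl ⟨i, h₁⟩) (hμl ⟨i, h₁⟩) this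
  calc S.val.map d = (l : Multiset ℕ) := (Multiset.sort_eq _ _).symm
    _ = (range #S).val.map μ := by rw [hl_eq]; rfl

end Majorization

namespace IsKTree

section Step

variable {m k : ℕ} {G : SimpleGraph (Fin m)} {T : Finset (Fin m)}

lemma degreeProd_pos (hk : 0 < k) (hG : IsKTree k G) (hm : k + 1 ≤ m) : 0 < degreeProd G :=
  _root_.degreeProd_pos fun v => hk.trans_le (hG.le_degree hm v)

lemma degreeProd_addSimplicialVertex (hk : 0 < k) (hG : IsKTree k G) (hm : k + 1 ≤ m)
    (hT : #T = k) :
    degreeProd (addSimplicialVertex G T) =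
      k * (∏ v ∈ T, degreeGrowth (G.degree v)) * degreeProd G := by
  rw [_root_.degreeProd_addSimplicialVertex fun v _ => hk.trans_le (hG.le_degree hm v), hT]

lemma degreeGrowth_pow_le_prod (hk : 0 < k) (hG : IsKTree k G) (hm : k + 1 ≤ m) (hT : #T = k) :
    degreeGrowth (m - 1) ^ k ≤ ∏ v ∈ T, degreeGrowth (G.degree v) ∧
      (degreeGrowth (m - 1) ^ k = ∏ v ∈ T, degreeGrowth (G.degree v) →
        ∀ v ∈ T, G.degree v = m - 1) := by
  have hle : ∀ v ∈ T, degreeGrowth (m - 1) ≤ degreeGrowth (G.degree v) := fun v _ => by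
    have := G.degree_lt_card_verts v
    have := hG.le_degree hm v
    simp only [Fintype.card_fin] at *
    exact degreeGrowth_strictAntiOn.antitoneOn (by simp; omega) (by simp; omega) (by omega)
  have hpos : ∀ v ∈ T, 0 < degreeGrowth (m - 1) := fun _ _ => degreeGrowth_pos (by omega)
  rw [← hT, ← prod_const]
  refine ⟨prod_le_prod (fun v hv => (hpos v hv).le) hle, fun h v hv => ?_⟩
  have heq := forall_eq_of_prod_eq_prod hpos hle h v hv
  have := G.degree_lt_card_verts v
  have := hG.le_degree hm v
  simp only [Fintype.card_fin] at *
  exact (degreeGrowth_strictAntiOn.injOn (by simp; omega) (by simp; omega) heq).symm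

lemma prod_degreeGrowth_le (hk : 0 < k) (hG : IsKTree k G) (hm : k + 1 ≤ m) (hT : #T = k)
    (hTc : G.IsClique (T : Set (Fin m))) :
    ∏ v ∈ T, degreeGrowth (G.degree v) ≤
        ∏ j ∈ range k, degreeGrowth (min (k + j) (m - 1)) ∧
      (∏ v ∈ T, degreeGrowth (G.degree v) =
          ∏ j ∈ range k, degreeGrowth (min (k + j) (m - 1)) →
        T.val.map (fun v => G.degree v) = (range k).val.map fun j => min (k + j) (m - 1)) := by
  have := prod_le_prod_of_card_filter_lt_le degreeGrowth_strictAntiOn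
    (fun _ h => degreeGrowth_pos h) (fun i _ => by omega) fun i _ =>
      hG.card_filter_degree_lt_le hTc hT i
  rwa [hT] at this

end Step

variable {n k : ℕ} {G : SimpleGraph (Fin n)}

theorem degreeProd_kStar_le (hk : 0 < k) (hG : IsKTree k G) :
    degreeProd (kStar n k) ≤ degreeProd G := by
  refine hG.top_induction (P := fun n G => degreeProd (kStar n k) ≤ degreeProd G)
    (fun n hn => by rw [kStar_eq_top hn]) fun m G T hG hm hT hTc ih => ?_
  rw [degreeProd_kStar_succ hm, hG.degreeProd_addSimplicialVertex hk hm hT]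
  have := degreeProd_nonneg (kStar m k)
  have := prod_nonneg fun v (_ : v ∈ T) => degreeGrowth_nonneg (G.degree v)
  gcongr
  exact (hG.degreeGrowth_pow_le_prod hk hm hT).1

theorem degreeProd_le_kPath (hk : 0 < k) (hG : IsKTree k G) :
    degreeProd G ≤ degreeProd (kPath n k) := by
  refine hG.top_induction (P := fun n G => degreeProd G ≤ degreeProd (kPath n k))
    (fun n hn => by rw [kPath_eq_top hn]) fun m G T hG hm hT hTc ih => ?_
  rw [degreeProd_kPath_succ hm, hG.degreeProd_addSimplicialVertex hk hm hT]
  have := degreeProd_nonneg G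
  have := prod_nonneg fun j (_ : j ∈ range k) => degreeGrowth_nonneg (min (k + j) (m - 1))
  gcongr
  exact (hG.prod_degreeGrowth_le hk hm hT hTc).1

theorem nonempty_iso_kStar (hk : 0 < k) (hG : IsKTree k G)
    (h : degreeProd G = degreeProd (kStar n k)) : Nonempty (G ≃g kStar n k) := by
  refine hG.top_induction (P := fun n G => degreeProd G = degreeProd (kStar n k) →
    Nonempty (G ≃g kStar n k)) (fun n hn _ => by rw [kStar_eq_top hn]; exact ⟨Iso.refl⟩)
    (fun m G T hG hm hT hTc ih h => ?_) h
  rw [degreeProd_kStar_succ hm, hG.degreeProd_addSimplicialVertex hk hm hT, mul_assoc, mul_assoc,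
    mul_right_inj' (by positivity)] at h
  obtain ⟨hle, hdeg⟩ := hG.degreeGrowth_pow_le_prod hk hm hT
  obtain ⟨hX, hP⟩ := (mul_eq_mul_iff_eq_and_eq_of_pos hle (degreeProd_kStar_le hk hG)
    (pow_pos (degreeGrowth_pos (by omega)) k) (hG.degreeProd_pos hk hm)).1 h.symm
  obtain ⟨e⟩ := ih hP.symm
  obtain ⟨τ, hτ⟩ := exists_iso_image_eq_of_isUniversal (G := kStar m k) (T.image e)
    (starCore m k)
    (by rw [card_image_of_injective _ e.injective, hT, card_starCore (by omega)])
    (fun v hv _ => by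
      obtain ⟨u, hu, rfl⟩ := mem_image.1 hv
      exact (degree_eq_card_sub_one _ _).1 (by simpa using hdeg hX u hu))
    (fun v hv _ => isUniversal_kStar (by simpa [starCore] using hv))
  rw [← addSimplicialVertex_kStar]
  exact nonempty_iso_addSimplicialVertex (e.trans τ) (by rw [← hτ, image_image]; rfl)

theorem nonempty_iso_kPath (hk : 0 < k) (hG : IsKTree k G)
    (h : degreeProd G = degreeProd (kPath n k)) : Nonempty (G ≃g kPath n k) := by
  refine hG.top_induction (P := fun n G => degreeProd G = degreeProd (kPath n k) →
    Nonempty (G ≃g kPath n k)) (fun n hn _ => by rw [kPath_eq_top hn]; exact ⟨Iso.refl⟩)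
    (fun m G T hG hm hT hTc ih h => ?_) h
  rw [degreeProd_kPath_succ hm, hG.degreeProd_addSimplicialVertex hk hm hT, mul_assoc, mul_assoc,
    mul_right_inj' (by positivity)] at h
  obtain ⟨hle, hdeg⟩ := hG.prod_degreeGrowth_le hk hm hT hTc
  obtain ⟨hX, hP⟩ := (mul_eq_mul_iff_eq_and_eq_of_pos' hle (degreeProd_le_kPath hk hG)
    (prod_pos fun j _ => degreeGrowth_pos (by omega)) (hG.degreeProd_pos hk hm)).1 h
  obtain ⟨e⟩ := ih hP
  obtain ⟨τ, hτ⟩ := exists_iso_image_eq_pathTail hk hm (S := T.image e)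
    (e.isClique_image hTc)
    (by rw [card_image_of_injective _ e.injective, hT])
    (by rw [e.map_degree_image, hdeg hX])
  rw [← addSimplicialVertex_kPath]
  exact nonempty_iso_addSimplicialVertex (e.trans τ) (by rw [← hτ, image_image]; rfl)

end IsKTree

/-- Theorem 2: for any `k`-tree `G` on `n` vertices and any real `c > 0`,
`∏_{1,c}(S_{k,n-k}) ≤ ∏_{1,c}(G) ≤ ∏_{1,c}(P_n^k)`, with equality on the left iff
`G ≅ S_{k,n-k}` and on the right iff `G ≅ P_n^k`. -/
theorem ktree_zagreb1 (k n : ℕ) (hk : 0 < k) (G : SimpleGraph (Fin n))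
    (hG : IsKTree k G) (c : ℝ) (hc : 0 < c) :
    (Z1 (kStar n k) c ≤ Z1 G c ∧ Z1 G c ≤ Z1 (kPath n k) c) ∧
    (Z1 G c = Z1 (kStar n k) c ↔ Nonempty (G ≃g kStar n k)) ∧
    (Z1 G c = Z1 (kPath n k) c ↔ Nonempty (G ≃g kPath n k)) := by
  simp only [Z1_eq_degreeProd_rpow, Real.rpow_left_inj (degreeProd_nonneg _) (degreeProd_nonneg _)
    hc.ne']
  refine ⟨⟨Real.rpow_le_rpow (degreeProd_nonneg _) (hG.degreeProd_kStar_le hk) hc.le,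
    Real.rpow_le_rpow (degreeProd_nonneg _) (hG.degreeProd_le_kPath hk) hc.le⟩,
    ⟨hG.nonempty_iso_kStar hk, fun ⟨e⟩ => e.degreeProd_eq⟩,
    ⟨hG.nonempty_iso_kPath hk, fun ⟨e⟩ => e.degreeProd_eq⟩⟩
end
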